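/- arXiv:2605.23379 — 3 statements merged into one kernel-verified Lean document; each statement's English description precedes it below -/
import Mathlib

section
/- Let T be a finite tree with at least two edges. Then the largest eigenvalue of its Ricci matrix satisfies λ_max(R_T) ≥ −1. -/
open SimpleGraph Matrix Finset

/-- The largest eigenvalue of a real matrix, defined as the supremum of its set of
real eigenvalues. -/
noncomputable def lambdaMax {n : Type*} [Fintype n] (M : Matrix n n ℝ) : ℝ :=
  sSup {μ : ℝ | ∃ x : n → ℝ, x ≠ 0 ∧ M.mulVec x = μ • x}

/-- The Ricci matrix of a graph: `(R)_{e,e} = -(1/d_x + 1/d_y)` for `e = {x,y}`,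
`(R)_{e,e'} = 1/d_z` for distinct edges sharing the endpoint `z`, and `0` for
disjoint edges. -/
noncomputable def ricciMatrix {V : Type*} [Fintype V] [DecidableEq V]
    (G : SimpleGraph V) [DecidableRel G.Adj] :
    Matrix G.edgeSet G.edgeSet ℝ := fun e e' =>
  (if e = e' then (-1 : ℝ) else 1) *
    ∑ z : V, (if z ∈ (e : Sym2 V) ∧ z ∈ (e' : Sym2 V) then ((G.degree z : ℝ))⁻¹ else 0)

/-!
λ_max bounds every Rayleigh quotient of the symmetric matrix R_T. Counting degrees, a tree with
at least two edges has a vertex z with two neighbours u ≠ w; on the indicator vector of the edges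
zu and zw the two 1/d_z contributions of the off-diagonal entries cancel those on the diagonal,
leaving the quotient -(1/d_u + 1/d_w)/2 ≥ -1.
-/

namespace Matrix.IsHermitian

variable {n : Type*} [Fintype n] [DecidableEq n] {A : Matrix n n ℝ}

theorem posSemidef_smul_one_sub (hA : A.IsHermitian) {μ : ℝ} (hμ : ∀ i, hA.eigenvalues i ≤ μ) :
    (μ • 1 - A).PosSemidef := by
  set U : Matrix n n ℝ := (hA.eigenvectorUnitary : Matrix n n ℝ) with hUdef
  have hU : U * Uᴴ = 1 := Matrix.mem_unitaryGroup_iff.mp hA.eigenvectorUnitary.2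
  have hdiag : μ • 1 - A = U * diagonal (fun i ↦ μ - hA.eigenvalues i) * Uᴴ := by
    have hsplit : diagonal (fun i ↦ μ - hA.eigenvalues i)
        = μ • 1 - diagonal (RCLike.ofReal ∘ hA.eigenvalues) := by
      ext i j
      rcases eq_or_ne i j with rfl | h <;> simp [*]
    rw [hsplit, mul_sub, sub_mul, Matrix.mul_smul, mul_one, Matrix.smul_mul, hU,
      ← star_eq_conjTranspose, hUdef, ← Unitary.conjStarAlgAut_apply (S := ℝ),
      ← hA.spectral_theorem]
  rw [hdiag]
  exact (PosSemidef.diagonal fun i ↦ sub_nonneg.mpr (hμ i)).mul_mul_conjTranspose_same U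

theorem dotProduct_mulVec_le (hA : A.IsHermitian) {μ : ℝ} (hμ : ∀ i, hA.eigenvalues i ≤ μ)
    (x : n → ℝ) : x ⬝ᵥ A *ᵥ x ≤ μ * (x ⬝ᵥ x) := by
  have := (hA.posSemidef_smul_one_sub hμ).dotProduct_mulVec_nonneg x
  rwa [star_trivial, sub_mulVec, smul_mulVec, one_mulVec, dotProduct_sub, dotProduct_smul,
    smul_eq_mul, sub_nonneg] at this

theorem lambdaMax_eq_sup' [Nonempty n] (hA : A.IsHermitian) :
    lambdaMax A = univ.sup' univ_nonempty hA.eigenvalues := by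
  obtain ⟨i, -, hi⟩ := exists_mem_eq_sup' univ_nonempty hA.eigenvalues
  have hle : ∀ j, hA.eigenvalues j ≤ univ.sup' univ_nonempty hA.eigenvalues :=
    fun j ↦ le_sup' _ (mem_univ j)
  refine IsGreatest.csSup_eq ⟨⟨_, ?_, hi ▸ hA.mulVec_eigenvectorBasis i⟩, ?_⟩
  · simpa using hA.eigenvectorBasis.orthonormal.ne_zero i
  · rintro ν ⟨x, hx, hAx⟩
    have hpos : 0 < x ⬝ᵥ x := by simpa using dotProduct_star_self_pos_iff.mpr hx
    have hν := hA.dotProduct_mulVec_le hle x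
    rw [hAx, dotProduct_smul, smul_eq_mul] at hν
    exact le_of_mul_le_mul_right hν hpos

theorem dotProduct_mulVec_le_lambdaMax_mul [Nonempty n] (hA : A.IsHermitian) (x : n → ℝ) :
    x ⬝ᵥ A *ᵥ x ≤ lambdaMax A * (x ⬝ᵥ x) :=
  hA.lambdaMax_eq_sup' ▸ hA.dotProduct_mulVec_le (fun i ↦ le_sup' _ (mem_univ i)) x

end Matrix.IsHermitian

namespace Matrix

variable {n R : Type*} [Fintype n] [DecidableEq n] [CommSemiring R]

theorem dotProduct_mulVec_single_add_single (A : Matrix n n R) (i j : n) :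
    (Pi.single i 1 + Pi.single j 1) ⬝ᵥ A *ᵥ (Pi.single i 1 + Pi.single j 1)
      = A i i + A i j + (A j i + A j j) := by
  simp only [mulVec_add, mulVec_single_one, dotProduct_add, add_dotProduct,
    single_one_dotProduct, col_apply]
  ring

theorem single_add_single_dotProduct_self {i j : n} (hij : i ≠ j) :
    (Pi.single i 1 + Pi.single j 1 : n → R) ⬝ᵥ (Pi.single i 1 + Pi.single j 1) = 2 := by
  simp [dotProduct_add, hij, hij.symm, one_add_one_eq_two]

end Matrix

namespace SimpleGraph

variable {V : Type*} [Fintype V] {G : SimpleGraph V} [DecidableRel G.Adj]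

theorem IsTree.exists_two_le_degree (hT : G.IsTree) (h2 : 2 ≤ #G.edgeFinset) :
    ∃ z, 2 ≤ G.degree z := by
  by_contra! hdeg
  have hsum : ∑ v, G.degree v ≤ Fintype.card V := by
    simpa using sum_le_card_nsmul univ (fun v ↦ G.degree v) 1 fun v _ ↦ by
      have := hdeg v; omega
  have := G.sum_degrees_eq_twice_card_edges
  have := hT.card_edgeFinset
  omega

variable [DecidableEq V]

theorem ricciMatrix_apply_self {a b : V} (h : G.Adj a b) :
    ricciMatrix G ⟨s(a, b), h⟩ ⟨s(a, b), h⟩ = -((G.degree a : ℝ)⁻¹ + (G.degree b : ℝ)⁻¹) := by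
  simp [ricciMatrix, Sym2.mem_iff, Finset.sum_ite, Finset.filter_or, Finset.filter_eq',
    Finset.sum_pair (G.ne_of_adj h)]

theorem ricciMatrix_apply_of_adj_of_adj {z u w : V} (hu : G.Adj z u) (hw : G.Adj z w)
    (huw : u ≠ w) : ricciMatrix G ⟨s(z, u), hu⟩ ⟨s(z, w), hw⟩ = (G.degree z : ℝ)⁻¹ := by
  have hcommon : ∀ x, (x = z ∨ x = u) ∧ (x = z ∨ x = w) ↔ x = z := by grind
  have hne : (⟨s(z, u), hu⟩ : G.edgeSet) ≠ ⟨s(z, w), hw⟩ :=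
    fun h ↦ huw (Sym2.congr_right.mp (congrArg Subtype.val h))
  simp [ricciMatrix, Sym2.mem_iff, hcommon, hne]

variable (G)

theorem ricciMatrix_isHermitian : (ricciMatrix G).IsHermitian := by
  refine isHermitian_iff_isSymm.mpr (IsSymm.ext fun e e' ↦ ?_)
  simp only [ricciMatrix, eq_comm (a := e), and_comm]

end SimpleGraph

/-- For a finite tree with at least two edges, `λ_max(R_T) ≥ -1`. -/
theorem lambdaMax_ricci_ge_neg_one {V : Type*} [Fintype V] [DecidableEq V]
    (G : SimpleGraph V) [DecidableRel G.Adj]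
    (hT : G.IsTree) (h2 : 2 ≤ G.edgeFinset.card) :
    -1 ≤ lambdaMax (ricciMatrix G) := by
  obtain ⟨z, hz⟩ := hT.exists_two_le_degree h2
  obtain ⟨u, w, hu, hw, huw⟩ := one_lt_card_iff.mp (G.card_neighborFinset_eq_degree z ▸ hz)
  rw [mem_neighborFinset] at hu hw
  set e₁ : G.edgeSet := ⟨s(z, u), hu⟩
  set e₂ : G.edgeSet := ⟨s(z, w), hw⟩
  have he : e₁ ≠ e₂ := fun h ↦ huw (Sym2.congr_right.mp (congrArg Subtype.val h))
  have : Nonempty G.edgeSet := ⟨e₁⟩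
  set x : G.edgeSet → ℝ := Pi.single e₁ 1 + Pi.single e₂ 1
  have hquad : x ⬝ᵥ ricciMatrix G *ᵥ x = -((G.degree u : ℝ)⁻¹ + (G.degree w : ℝ)⁻¹) := by
    rw [dotProduct_mulVec_single_add_single, ricciMatrix_apply_self, ricciMatrix_apply_self,
      ricciMatrix_apply_of_adj_of_adj hu hw huw, ricciMatrix_apply_of_adj_of_adj hw hu huw.symm]
    ring
  have hrayleigh := (ricciMatrix_isHermitian G).dotProduct_mulVec_le_lambdaMax_mul x
  rw [hquad, single_add_single_dotProduct_self he] at hrayleigh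
  have hdu : (G.degree u : ℝ)⁻¹ ≤ 1 :=
    inv_le_one_of_one_le₀ (mod_cast (G.degree_pos_iff_exists_adj u).mpr ⟨z, hu.symm⟩)
  have hdw : (G.degree w : ℝ)⁻¹ ≤ 1 :=
    inv_le_one_of_one_le₀ (mod_cast (G.degree_pos_iff_exists_adj w).mpr ⟨z, hw.symm⟩)
  linarith
end

section
/- Let T be a finite tree with at least one edge, v a vertex of T with degree d = d_T(v), and T' the tree obtained from T by attaching one new pendant edge at v. Then for every f : E(T) → ℝ and every y ∈ ℝ, the extension f_y of f to E(T') satisfies ⟨f_y, R_{T'} f_y⟩ − ⟨f, R_T f⟩ = −(S² − 2A)/(d(d+1)) + 2Sy/(d+1) − ((d+2)/(d+1)) y², where S = Σ_{e ∋ v} f_e and A = Σ_{e ∋ v} f_e² (sums over edges of T incident to v). -/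
open SimpleGraph Matrix Finset

/-- Adjacency for the tree obtained by attaching `k` new pendant vertices at `v`. -/
def addLeavesAdj {V : Type*} (G : SimpleGraph V) (v : V) (k : ℕ) :
    V ⊕ Fin k → V ⊕ Fin k → Prop
  | Sum.inl x, Sum.inl y => G.Adj x y
  | Sum.inl x, Sum.inr _ => x = v
  | Sum.inr _, Sum.inl y => y = v
  | Sum.inr _, Sum.inr _ => False

/-- The tree obtained from `G` by attaching `k` new pendant edges at `v`:
`k` new vertices `Sum.inr i`, each joined to `v` by a new edge. -/
def addLeaves {V : Type*} (G : SimpleGraph V) (v : V) (k : ℕ) :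
    SimpleGraph (V ⊕ Fin k) where
  Adj := addLeavesAdj G v k
  symm := by
    constructor
    intro a b h
    cases a <;> cases b <;> simp_all [addLeavesAdj] <;> exact h.symm
  loopless := by
    constructor
    intro a
    cases a <;> simp [addLeavesAdj]

instance {V : Type*} [DecidableEq V] (G : SimpleGraph V) [DecidableRel G.Adj]
    (v : V) (k : ℕ) : DecidableRel (addLeaves G v k).Adj := fun a b =>
  match a, b with
  | Sum.inl x, Sum.inl y => inferInstanceAs (Decidable (G.Adj x y))
  | Sum.inl x, Sum.inr _ => inferInstanceAs (Decidable (x = v))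
  | Sum.inr _, Sum.inl y => inferInstanceAs (Decidable (y = v))
  | Sum.inr _, Sum.inr _ => inferInstanceAs (Decidable False)

/-- The extension `f_y` of an edge function `f` on `G` to `addLeaves G v 1`:
it agrees with `f` on (the images of) old edges and takes the value `y` on the new
pendant edge. -/
noncomputable def extendLeaf {V : Type*} [Fintype V] [DecidableEq V]
    (G : SimpleGraph V) [DecidableRel G.Adj] (v : V) (f : G.edgeSet → ℝ) (y : ℝ) :
    (addLeaves G v 1).edgeSet → ℝ := fun e =>
  if h : ∃ e₀ : G.edgeSet, Sym2.map Sum.inl (e₀ : Sym2 V) = (e : Sym2 (V ⊕ Fin 1))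
  then f h.choose else y

/-! The Ricci form splits over vertices: `⟨f, R f⟩ = ∑_z (S_z² - 2 A_z) / d_z`, where `S_z` and
`A_z` are the sums of `f` and of `f²` over the edges at `z`. Attaching a pendant edge at `v` only
changes the term of `v` (`d, S, A` become `d + 1, S + y, A + y²`) and adds the term `-y²` of the
new leaf; the rest is algebra. -/

theorem Finset.sum_sum_ite_eq_neg_one_mul {ι R : Type*} [Fintype ι] [DecidableEq ι] [CommRing R]
    (g : ι → R) :
    ∑ i, ∑ j, (if i = j then (-1 : R) else 1) * (g i * g j) = (∑ i, g i) ^ 2 - 2 * ∑ i, g i ^ 2 := by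
  have hsplit : ∀ i j, (if i = j then (-1 : R) else 1) * (g i * g j)
      = g i * g j - 2 * if i = j then g i * g j else 0 := by
    intro i j; split_ifs <;> ring
  simp only [hsplit, Finset.sum_sub_distrib, ← Finset.mul_sum, Finset.sum_ite_eq,
    Finset.mem_univ, if_true, sq, Finset.sum_mul_sum]

section Ricci

variable {V : Type*} [Fintype V] [DecidableEq V] (G : SimpleGraph V) [DecidableRel G.Adj]

noncomputable def incidentSum (g : G.edgeSet → ℝ) (z : V) : ℝ :=
  ∑ e : G.edgeSet, if z ∈ (e : Sym2 V) then g e else 0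

theorem incidentSum_eq_zero_of_degree_eq_zero {z : V} (hz : G.degree z = 0)
    (g : G.edgeSet → ℝ) : incidentSum G g z = 0 := by
  refine Finset.sum_eq_zero fun e _ => if_neg fun hze => ?_
  obtain ⟨w, hw⟩ := Sym2.mem_iff_exists.mp hze
  have hadj : G.Adj z w := by rw [← G.mem_edgeSet, ← hw]; exact e.2
  exact (G.degree_pos_iff_exists_adj z).mpr ⟨w, hadj⟩ |>.ne' hz

theorem dotProduct_ricciMatrix_mulVec (f : G.edgeSet → ℝ) :
    f ⬝ᵥ ricciMatrix G *ᵥ f = ∑ z : V, (G.degree z : ℝ)⁻¹ *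
      (incidentSum G f z ^ 2 - 2 * incidentSum G (fun e => f e ^ 2) z) := by
  set fz : V → G.edgeSet → ℝ := fun z e => if z ∈ (e : Sym2 V) then f e else 0
  have hentry : ∀ e e', f e * (ricciMatrix G e e' * f e') = ∑ z, (G.degree z : ℝ)⁻¹ *
      ((if e = e' then (-1 : ℝ) else 1) * (fz z e * fz z e')) := by
    intro e e'
    simp only [ricciMatrix, Finset.mul_sum, Finset.sum_mul]
    refine Finset.sum_congr rfl fun z _ => ?_
    by_cases he : z ∈ (e : Sym2 V)
    · by_cases he' : z ∈ (e' : Sym2 V)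
      · simp only [fz, he, he', and_self, if_true]
        split_ifs <;> ring
      · simp [fz, he']
    · simp [fz, he]
  have hsq : ∀ z, ∑ e, fz z e ^ 2 = incidentSum G (fun e => f e ^ 2) z := fun z =>
    Finset.sum_congr rfl fun e _ => by by_cases he : z ∈ (e : Sym2 V) <;> simp [fz, he]
  simp only [dotProduct, mulVec, Finset.mul_sum, hentry]
  rw [Finset.sum_congr rfl fun e _ => Finset.sum_comm, Finset.sum_comm]
  refine Finset.sum_congr rfl fun z _ => ?_
  simp only [← Finset.mul_sum]
  rw [Finset.sum_sum_ite_eq_neg_one_mul, hsq]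
  rfl

end Ricci

section AddLeaf

variable {V : Type*} (G : SimpleGraph V) (v : V)

def liftEdge (e : G.edgeSet) : (addLeaves G v 1).edgeSet :=
  ⟨Sym2.map Sum.inl e, by
    obtain ⟨s, hs⟩ := e
    induction s using Sym2.ind with
    | _ a b => exact hs⟩

def pendantEdge : (addLeaves G v 1).edgeSet :=
  ⟨s(Sum.inl v, Sum.inr 0), rfl⟩

theorem inl_mem_liftEdge_iff (w : V) (e : G.edgeSet) :
    Sum.inl w ∈ (liftEdge G v e : Sym2 (V ⊕ Fin 1)) ↔ w ∈ (e : Sym2 V) := by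
  simp [liftEdge, Sym2.mem_map]

theorem inr_notMem_liftEdge (i : Fin 1) (e : G.edgeSet) :
    Sum.inr i ∉ (liftEdge G v e : Sym2 (V ⊕ Fin 1)) := by
  simp [liftEdge, Sym2.mem_map]

theorem inl_mem_pendantEdge_iff (w : V) :
    Sum.inl w ∈ (pendantEdge G v : Sym2 (V ⊕ Fin 1)) ↔ w = v := by
  simp [pendantEdge]

theorem inr_mem_pendantEdge (i : Fin 1) : Sum.inr i ∈ (pendantEdge G v : Sym2 (V ⊕ Fin 1)) := by
  simp [pendantEdge, Subsingleton.elim i 0]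

theorem liftEdge_injective : Function.Injective (liftEdge G v) := fun _ _ h =>
  Subtype.ext (Sym2.map.injective Sum.inl_injective (congrArg Subtype.val h))

theorem liftEdge_ne_pendantEdge (e : G.edgeSet) : liftEdge G v e ≠ pendantEdge G v := fun h =>
  inr_notMem_liftEdge G v 0 e (h ▸ inr_mem_pendantEdge G v 0)

theorem bijective_addLeafEdge :
    Function.Bijective fun o : Option G.edgeSet => o.elim (pendantEdge G v) (liftEdge G v) := by
  refine ⟨?_, ?_⟩
  · rintro (_ | e₁) (_ | e₂) h
    · rfl
    · exact absurd h.symm (liftEdge_ne_pendantEdge G v e₂)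
    · exact absurd h (liftEdge_ne_pendantEdge G v e₁)
    · exact congrArg some (liftEdge_injective G v h)
  · rintro ⟨s, hs⟩
    induction s using Sym2.ind with
    | _ a b =>
      rcases a with x | i <;> rcases b with w | j
      · exact ⟨some ⟨s(x, w), hs⟩, rfl⟩
      · obtain rfl : x = v := hs
        exact ⟨none, by rw [Subsingleton.elim j 0]; rfl⟩
      · obtain rfl : w = v := hs
        exact ⟨none, Subtype.ext (by rw [Subsingleton.elim i 0]; exact Sym2.eq_swap)⟩
      · exact hs.elim

variable [Fintype V] [DecidableEq V] [DecidableRel G.Adj]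

theorem sum_edgeSet_addLeaves {M : Type*} [AddCommMonoid M] (F : (addLeaves G v 1).edgeSet → M) :
    ∑ e, F e = ∑ e : G.edgeSet, F (liftEdge G v e) + F (pendantEdge G v) := by
  rw [← Fintype.sum_bijective _ (bijective_addLeafEdge G v) _ F fun _ => rfl, Fintype.sum_option,
    add_comm]
  rfl

theorem incidentSum_addLeaves_inl (g : (addLeaves G v 1).edgeSet → ℝ) (w : V) :
    incidentSum (addLeaves G v 1) g (Sum.inl w) =
      incidentSum G (g ∘ liftEdge G v) w + if w = v then g (pendantEdge G v) else 0 := by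
  simp only [incidentSum, sum_edgeSet_addLeaves, inl_mem_liftEdge_iff, inl_mem_pendantEdge_iff,
    Function.comp_apply]

theorem incidentSum_addLeaves_inr (g : (addLeaves G v 1).edgeSet → ℝ) (i : Fin 1) :
    incidentSum (addLeaves G v 1) g (Sum.inr i) = g (pendantEdge G v) := by
  simp only [incidentSum, sum_edgeSet_addLeaves, inr_notMem_liftEdge, inr_mem_pendantEdge,
    if_false, if_true, Finset.sum_const_zero, zero_add]

theorem degree_addLeaves_inl (w : V) :
    (addLeaves G v 1).degree (Sum.inl w) = G.degree w + if w = v then 1 else 0 := by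
  simp only [← card_neighborFinset_eq_degree, neighborFinset_eq_filter, Finset.card_filter,
    Fintype.sum_sum_type, Fin.sum_univ_one]
  rfl

theorem degree_addLeaves_inr (i : Fin 1) : (addLeaves G v 1).degree (Sum.inr i) = 1 := by
  simp only [← card_neighborFinset_eq_degree, neighborFinset_eq_filter, Finset.card_filter,
    Fintype.sum_sum_type, Fin.sum_univ_one]
  change (∑ x : V, if x = v then 1 else 0) + (if False then 1 else 0) = 1
  simp

theorem extendLeaf_liftEdge (f : G.edgeSet → ℝ) (y : ℝ) (e : G.edgeSet) :
    extendLeaf G v f y (liftEdge G v e) = f e := by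
  have hex : ∃ e₀ : G.edgeSet,
      Sym2.map Sum.inl (e₀ : Sym2 V) = (liftEdge G v e : Sym2 (V ⊕ Fin 1)) := ⟨e, rfl⟩
  rw [extendLeaf, dif_pos hex, liftEdge_injective G v (Subtype.ext hex.choose_spec)]

theorem extendLeaf_pendantEdge (f : G.edgeSet → ℝ) (y : ℝ) :
    extendLeaf G v f y (pendantEdge G v) = y := by
  refine dif_neg fun ⟨e₀, he₀⟩ => ?_
  have h0 : Sum.inr (0 : Fin 1) ∈ Sym2.map Sum.inl (e₀ : Sym2 V) := he₀ ▸ inr_mem_pendantEdge G v 0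
  simp [Sym2.mem_map] at h0

theorem dotProduct_ricciMatrix_addLeaves_sub (f : G.edgeSet → ℝ) (y : ℝ) :
    extendLeaf G v f y ⬝ᵥ ricciMatrix (addLeaves G v 1) *ᵥ extendLeaf G v f y -
        f ⬝ᵥ ricciMatrix G *ᵥ f =
      ((G.degree v : ℝ) + 1)⁻¹ * ((incidentSum G f v + y) ^ 2 -
          2 * (incidentSum G (fun e => f e ^ 2) v + y ^ 2)) -
        (G.degree v : ℝ)⁻¹ * (incidentSum G f v ^ 2 - 2 * incidentSum G (fun e => f e ^ 2) v) -
        y ^ 2 := by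
  have hf : extendLeaf G v f y ∘ liftEdge G v = f := funext (extendLeaf_liftEdge G v f y)
  have hf2 : (fun e => extendLeaf G v f y e ^ 2) ∘ liftEdge G v = fun e => f e ^ 2 :=
    funext fun e => congrArg (· ^ 2) (extendLeaf_liftEdge G v f y e)
  rw [dotProduct_ricciMatrix_mulVec, dotProduct_ricciMatrix_mulVec, Fintype.sum_sum_type,
    Fin.sum_univ_one, add_sub_right_comm, ← Finset.sum_sub_distrib]
  simp only [incidentSum_addLeaves_inl, incidentSum_addLeaves_inr, hf, hf2,
    extendLeaf_pendantEdge, degree_addLeaves_inl, degree_addLeaves_inr]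
  rw [Finset.sum_eq_single v (fun w _ hw => by simp [hw]) (by simp)]
  simp only [↓reduceIte, Nat.cast_add, Nat.cast_one, inv_one, one_mul]
  ring

end AddLeaf

theorem rayleigh_difference_one_step_general {V : Type*} [Fintype V] [DecidableEq V]
    (G : SimpleGraph V) [DecidableRel G.Adj]
    (v : V) (f : G.edgeSet → ℝ) (y : ℝ) :
    (extendLeaf G v f y) ⬝ᵥ (ricciMatrix (addLeaves G v 1)).mulVec (extendLeaf G v f y) -
        f ⬝ᵥ (ricciMatrix G).mulVec f =
      -(((∑ e : G.edgeSet, if v ∈ (e : Sym2 V) then f e else 0) ^ 2 -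
            2 * ∑ e : G.edgeSet, if v ∈ (e : Sym2 V) then (f e) ^ 2 else 0) /
          ((G.degree v : ℝ) * ((G.degree v : ℝ) + 1))) +
        2 * (∑ e : G.edgeSet, if v ∈ (e : Sym2 V) then f e else 0) * y /
          ((G.degree v : ℝ) + 1) -
        (((G.degree v : ℝ) + 2) / ((G.degree v : ℝ) + 1)) * y ^ 2 := by
  rw [dotProduct_ricciMatrix_addLeaves_sub]
  obtain hd | hd := Nat.eq_zero_or_pos (G.degree v)
  · -- an isolated `v` has `S = A = 0`, and the junk `0⁻¹ = 0` matches on both sides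
    have hS := incidentSum_eq_zero_of_degree_eq_zero G hd f
    have hA := incidentSum_eq_zero_of_degree_eq_zero G hd fun e => f e ^ 2
    simp only [incidentSum] at hS hA ⊢
    simp only [hd, hS, hA, Nat.cast_zero]
    ring
  · have hd' : (G.degree v : ℝ) ≠ 0 := by positivity
    simp only [incidentSum]
    field_simp
    ring

/-- Rayleigh difference formula for one-step leaf addition:
`⟨f_y, R_{T'} f_y⟩ − ⟨f, R_T f⟩ = −(S² − 2A)/(d(d+1)) + 2Sy/(d+1) − ((d+2)/(d+1)) y²`,
where `T'` is obtained from `T` by attaching one pendant edge at `v`, `d = d_T(v)`,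
`S = Σ_{e ∋ v} f_e` and `A = Σ_{e ∋ v} f_e²`. -/
theorem rayleigh_difference_one_step {V : Type*} [Fintype V] [DecidableEq V]
    (G : SimpleGraph V) [DecidableRel G.Adj]
    (hT : G.IsTree) (h1 : 1 ≤ G.edgeFinset.card) (v : V) (f : G.edgeSet → ℝ) (y : ℝ) :
    (extendLeaf G v f y) ⬝ᵥ (ricciMatrix (addLeaves G v 1)).mulVec (extendLeaf G v f y) -
        f ⬝ᵥ (ricciMatrix G).mulVec f =
      -(((∑ e : G.edgeSet, if v ∈ (e : Sym2 V) then f e else 0) ^ 2 -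
            2 * ∑ e : G.edgeSet, if v ∈ (e : Sym2 V) then (f e) ^ 2 else 0) /
          ((G.degree v : ℝ) * ((G.degree v : ℝ) + 1))) +
        2 * (∑ e : G.edgeSet, if v ∈ (e : Sym2 V) then f e else 0) * y /
          ((G.degree v : ℝ) + 1) -
        (((G.degree v : ℝ) + 2) / ((G.degree v : ℝ) + 1)) * y ^ 2 :=
  rayleigh_difference_one_step_general G v f y
end

section
/- Let T be a finite tree with at least one edge, v a vertex of T, and for k ≥ 2 let T_k be the tree obtained from T by attaching k new pendant edges g_1, …, g_k at v. If λ_max(R_{T_k}) is a simple eigenvalue of R_{T_k} and f is any eigenvector of R_{T_k} with eigenvalue λ_max(R_{T_k}), then f takes the same value on all the new pendant edges: f(g_i) = f(g_j) for all 1 ≤ i, j ≤ k. -/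
/-!
Two new pendant edges `g_i, g_j` meet the rest of the tree only at `v`, so
`δ_{g_i} - δ_{g_j}` is an eigenvector of the Ricci matrix, with eigenvalue `-(1 + 2 / d_v)`.
This lies strictly below the diagonal entry `R_{g_i g_i} = -(1 + 1 / d_v)`, which is at most
`λ_max`. Eigenvectors of a symmetric matrix for distinct eigenvalues are orthogonal, so every
`λ_max`-eigenvector `f` satisfies `f(g_i) - f(g_j) = 0`.
-/

open SimpleGraph Matrix Finset

/-- The `i`-th new pendant edge `g_i = {v, (new vertex i)}` of `addLeaves G v k`. -/
def newEdge {V : Type*} (G : SimpleGraph V) (v : V) (k : ℕ) (i : Fin k) :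
    (addLeaves G v k).edgeSet :=
  ⟨s(Sum.inl v, Sum.inr i), (addLeaves G v k).mem_edgeSet.mpr rfl⟩

namespace Matrix

variable {n : Type*} [Fintype n]

lemma bddAbove_eigenvalues (M : Matrix n n ℝ) :
    BddAbove {μ : ℝ | ∃ x : n → ℝ, x ≠ 0 ∧ M *ᵥ x = μ • x} := by
  classical
  refine ((Module.End.finite_hasEigenvalue (toLin' M)).subset ?_).bddAbove
  rintro μ ⟨x, hx, hMx⟩
  exact Module.End.hasEigenvalue_of_hasEigenvector
    ⟨Module.End.mem_eigenspace_iff.mpr (by simpa using hMx), hx⟩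

lemma le_lambdaMax {M : Matrix n n ℝ} {μ : ℝ} {x : n → ℝ} (hx : x ≠ 0)
    (hMx : M *ᵥ x = μ • x) : μ ≤ lambdaMax M :=
  le_csSup (bddAbove_eigenvalues M) ⟨x, hx, hMx⟩

lemma IsHermitian.dotProduct_eq_zero_of_eigenvalue_ne {M : Matrix n n ℝ} (hM : M.IsHermitian)
    {a b : ℝ} {x y : n → ℝ} (hx : M *ᵥ x = a • x) (hy : M *ᵥ y = b • y) (hab : a ≠ b) :
    x ⬝ᵥ y = 0 := by
  have hsymm : Mᵀ = M := isHermitian_iff_isSymm.mp hM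
  have key : b * (x ⬝ᵥ y) = a * (x ⬝ᵥ y) := by
    calc b * (x ⬝ᵥ y) = x ⬝ᵥ M *ᵥ y := by rw [hy, dotProduct_smul, smul_eq_mul]
      _ = Mᵀ *ᵥ x ⬝ᵥ y := by rw [dotProduct_mulVec, mulVec_transpose]
      _ = a * (x ⬝ᵥ y) := by rw [hsymm, hx, smul_dotProduct, smul_eq_mul]
  by_contra hxy
  exact hab (mul_right_cancel₀ hxy key).symm

variable [DecidableEq n] {M : Matrix n n ℝ}

lemma IsHermitian.posSemidef_lambdaMax_smul_one_sub (hM : M.IsHermitian) :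
    (lambdaMax M • 1 - M).PosSemidef := by
  have hM' : (lambdaMax M • 1 - M).IsHermitian :=
    (isHermitian_one.smul (IsSelfAdjoint.all _)).sub hM
  refine hM'.posSemidef_iff_eigenvalues_nonneg.mpr fun i ↦ ?_
  set b := ⇑(hM'.eigenvectorBasis i)
  have hb : b ≠ 0 := fun h ↦ hM'.eigenvectorBasis.toBasis.ne_zero i (by ext x; exact congrFun h x)
  have hMb : M *ᵥ b = (lambdaMax M - hM'.eigenvalues i) • b := by
    have := hM'.mulVec_eigenvectorBasis i
    rw [sub_mulVec, smul_mulVec, one_mulVec] at this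
    rw [sub_smul, ← this]
    abel
  change 0 ≤ hM'.eigenvalues i
  linarith [le_lambdaMax hb hMb]

lemma IsHermitian.diag_le_lambdaMax (hM : M.IsHermitian) (i : n) : M i i ≤ lambdaMax M := by
  have := hM.posSemidef_lambdaMax_smul_one_sub.diag_nonneg (i := i)
  simp only [sub_apply, smul_apply, one_apply_eq, smul_eq_mul, mul_one, sub_nonneg] at this
  exact this

end Matrix

lemma isHermitian_ricciMatrix {V : Type*} [Fintype V] [DecidableEq V] (G : SimpleGraph V)
    [DecidableRel G.Adj] : (ricciMatrix G).IsHermitian := by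
  ext e e'
  simp only [ricciMatrix, conjTranspose_apply, star_trivial]
  congr 1
  · simp [eq_comm]
  · exact Finset.sum_congr rfl fun z _ ↦ if_congr and_comm rfl rfl

namespace addLeaves

variable {V : Type*} (G : SimpleGraph V) (v : V) {k : ℕ}

lemma mem_newEdge_iff {z : V ⊕ Fin k} {i : Fin k} :
    z ∈ (newEdge G v k i : Sym2 (V ⊕ Fin k)) ↔ z = Sum.inl v ∨ z = Sum.inr i := by
  simp [newEdge]

lemma inr_mem_iff_eq_newEdge {i : Fin k} {e : (addLeaves G v k).edgeSet} :
    Sum.inr i ∈ (e : Sym2 (V ⊕ Fin k)) ↔ e = newEdge G v k i := by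
  refine ⟨fun h ↦ ?_, fun h ↦ h ▸ (mem_newEdge_iff G v).mpr (Or.inr rfl)⟩
  obtain ⟨e, he⟩ := e
  induction e with
  | h a b =>
    apply Subtype.ext
    change addLeavesAdj G v k a b at he
    rcases Sym2.mem_iff.mp h with rfl | rfl
    · cases b with
      | inl y => cases (he : y = v); exact Sym2.eq_swap
      | inr => exact he.elim
    · cases a with
      | inl y => cases (he : y = v); rfl
      | inr => exact he.elim

variable [Fintype V] [DecidableEq V] [DecidableRel G.Adj]

lemma degree_inr (i : Fin k) : (addLeaves G v k).degree (Sum.inr i) = 1 := by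
  rw [degree, card_eq_one]
  refine ⟨Sum.inl v, Finset.ext fun w ↦ ?_⟩
  rw [mem_neighborFinset, Finset.mem_singleton]
  cases w <;> simp [addLeaves, addLeavesAdj, eq_comm]

lemma degree_inl_pos (i : Fin k) : 0 < (addLeaves G v k).degree (Sum.inl v) :=
  degree_pos_iff_exists_adj _ _ |>.mpr ⟨Sum.inr i, rfl⟩

lemma sum_inv_degree_common_newEdge (e : (addLeaves G v k).edgeSet) (i : Fin k) :
    ∑ z, (if z ∈ (e : Sym2 (V ⊕ Fin k)) ∧ z ∈ (newEdge G v k i : Sym2 (V ⊕ Fin k))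
        then ((addLeaves G v k).degree z : ℝ)⁻¹ else 0) =
      (if Sum.inl v ∈ (e : Sym2 (V ⊕ Fin k))
        then ((addLeaves G v k).degree (Sum.inl v) : ℝ)⁻¹ else 0) +
      if e = newEdge G v k i then 1 else 0 := by
  have hterm : ∀ z : V ⊕ Fin k,
      (if z ∈ (e : Sym2 (V ⊕ Fin k)) ∧ z ∈ (newEdge G v k i : Sym2 (V ⊕ Fin k))
        then ((addLeaves G v k).degree z : ℝ)⁻¹ else 0) =
      (if z = Sum.inl v then (if Sum.inl v ∈ (e : Sym2 (V ⊕ Fin k))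
        then ((addLeaves G v k).degree (Sum.inl v) : ℝ)⁻¹ else 0) else 0) +
      if z = Sum.inr i then (if e = newEdge G v k i then 1 else 0) else 0 := by
    intro z
    simp only [mem_newEdge_iff]
    rcases z with z | z
    · by_cases hz : z = v
      · subst hz; simp
      · simp [hz]
    · by_cases hz : z = i
      · subst hz; simp [inr_mem_iff_eq_newEdge, degree_inr]
      · simp [hz]
  simp only [hterm, Finset.sum_add_distrib, Finset.sum_ite_eq', Finset.mem_univ, if_true]

lemma ricciMatrix_apply_newEdge (e : (addLeaves G v k).edgeSet) (i : Fin k) :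
    ricciMatrix (addLeaves G v k) e (newEdge G v k i) =
      if e = newEdge G v k i then -(((addLeaves G v k).degree (Sum.inl v) : ℝ)⁻¹ + 1)
      else if Sum.inl v ∈ (e : Sym2 (V ⊕ Fin k))
        then ((addLeaves G v k).degree (Sum.inl v) : ℝ)⁻¹ else 0 := by
  rw [ricciMatrix, sum_inv_degree_common_newEdge]
  split_ifs <;> simp_all [mem_newEdge_iff]

lemma ricciMatrix_mulVec_single_sub_single (i j : Fin k) :
    ricciMatrix (addLeaves G v k) *ᵥ
        (Pi.single (newEdge G v k i) 1 - Pi.single (newEdge G v k j) 1) =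
      (-(1 + 2 * ((addLeaves G v k).degree (Sum.inl v) : ℝ)⁻¹)) •
        (Pi.single (newEdge G v k i) 1 - Pi.single (newEdge G v k j) 1) := by
  ext e
  have hv (l : Fin k) : Sum.inl v ∈ (newEdge G v k l : Sym2 (V ⊕ Fin k)) :=
    (mem_newEdge_iff G v).mpr (Or.inl rfl)
  simp only [mulVec_sub, mulVec_single_one, Pi.sub_apply, col_apply, ricciMatrix_apply_newEdge,
    Pi.smul_apply, Pi.single_apply, smul_eq_mul]
  split_ifs <;> simp_all <;> ring

end addLeaves

theorem eigenvector_constant_on_new_leaves_general {V : Type*} [Fintype V] [DecidableEq V]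
    (G : SimpleGraph V) [DecidableRel G.Adj]
    (v : V) (k : ℕ)
    (f : (addLeaves G v k).edgeSet → ℝ)
    (heig : (ricciMatrix (addLeaves G v k)).mulVec f =
      lambdaMax (ricciMatrix (addLeaves G v k)) • f)
    (i j : Fin k) :
    f (newEdge G v k i) = f (newEdge G v k j) := by
  set d := ((addLeaves G v k).degree (Sum.inl v) : ℝ)
  have hd : 0 < d⁻¹ := inv_pos.mpr (Nat.cast_pos.mpr (addLeaves.degree_inl_pos G v i))
  have hR := isHermitian_ricciMatrix (addLeaves G v k)
  have hlt : -(1 + 2 * d⁻¹) < lambdaMax (ricciMatrix (addLeaves G v k)) :=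
    calc -(1 + 2 * d⁻¹) < -(d⁻¹ + 1) := by linarith
      _ = ricciMatrix (addLeaves G v k) (newEdge G v k i) (newEdge G v k i) := by
        rw [addLeaves.ricciMatrix_apply_newEdge, if_pos rfl]
      _ ≤ _ := hR.diag_le_lambdaMax _
  have horth := hR.dotProduct_eq_zero_of_eigenvalue_ne heig
    (addLeaves.ricciMatrix_mulVec_single_sub_single G v i j) hlt.ne'
  rwa [dotProduct_sub, dotProduct_single_one, dotProduct_single_one, sub_eq_zero] at horth

/-- If `λ_max(R_{T_k})` is a simple eigenvalue (algebraic multiplicity one as a root of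
the characteristic polynomial), then every eigenvector of `R_{T_k}` for `λ_max(R_{T_k})`
takes the same value on all the `k` new pendant edges. -/
theorem eigenvector_constant_on_new_leaves {V : Type*} [Fintype V] [DecidableEq V]
    (G : SimpleGraph V) [DecidableRel G.Adj]
    (hT : G.IsTree) (h1 : 1 ≤ G.edgeFinset.card) (v : V) (k : ℕ) (hk : 2 ≤ k)
    (hsimple :
      (ricciMatrix (addLeaves G v k)).charpoly.rootMultiplicity
        (lambdaMax (ricciMatrix (addLeaves G v k))) = 1)
    (f : (addLeaves G v k).edgeSet → ℝ) (hf : f ≠ 0)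
    (heig : (ricciMatrix (addLeaves G v k)).mulVec f =
      lambdaMax (ricciMatrix (addLeaves G v k)) • f)
    (i j : Fin k) :
    f (newEdge G v k i) = f (newEdge G v k j) :=
  eigenvector_constant_on_new_leaves_general G v k f heig i j
end
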